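/- Let BG = (V, E) be a bi-directed graph and let BG^t be its ListRankingTransform. If there is a valid bi-directed walk in BG from u to v with first-edge orientation pair (a₁, b₁) and last-edge orientation pair (a_m, b_m), then there is a (nonempty) directed path in BG^t from u^{a₁} to v^{b_m}. -/

import Mathlib

/-! Traversing a bi-directed edge forwards or backwards yields one of its two arcs in `BGᵗ`
between the oriented endpoints, and the agreement `b l = a (l + 1)` at inner vertices makes
consecutive arcs compose. -/

/-- Orientations of the arrowheads of a bi-directed edge: `fwd` = ▷, `rev` = ◁. -/
inductive Orient : Type
  | fwd | rev
  deriving DecidableEq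

/-- `¬` on orientations: swaps ▷ and ◁. -/
def Orient.neg : Orient → Orient
  | .fwd => .rev
  | .rev => .fwd

/-- A valid bi-directed walk of length `m ≥ 1` from `u` to `v` in the bi-directed graph
with edge set `E`: a vertex sequence `vert 0 = u, …, vert m = v` together with
orientation pairs `(a l, b l)` for `1 ≤ l ≤ m` such that each step traverses a
bi-directed edge (in either direction) and the orientations of consecutive edges agree
at each intermediate vertex. -/
def IsBiWalk {V : Type*} (E : Set (V × V × Orient × Orient)) (m : ℕ)
    (vert : ℕ → V) (a b : ℕ → Orient) (u v : V) : Prop :=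
  1 ≤ m ∧ vert 0 = u ∧ vert m = v ∧
  (∀ l, 1 ≤ l → l ≤ m →
    (vert (l - 1), vert l, a l, b l) ∈ E ∨
    (vert l, vert (l - 1), (b l).neg, (a l).neg) ∈ E) ∧
  (∀ l, 1 ≤ l → l < m → b l = a (l + 1))

/-- There is a valid bi-directed walk from `u` to `v`. -/
def BiWalk {V : Type*} (E : Set (V × V × Orient × Orient)) (u v : V) : Prop :=
  ∃ m vert a b, IsBiWalk E m vert a b u v

/-- The arcs of the directed graph `BGᵗ` produced by the ListRankingTransform on vertex
set `V × Orient` (writing `v^o` for `(v, o)`): each bi-directed edge `(u, v, o₁, o₂) ∈ E`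
yields the two directed arcs `u^{o₁} → v^{o₂}` and `v^{¬o₂} → u^{¬o₁}`. -/
def TArc {V : Type*} (E : Set (V × V × Orient × Orient)) (p q : V × Orient) : Prop :=
  ∃ u v o₁ o₂, (u, v, o₁, o₂) ∈ E ∧
    ((p = (u, o₁) ∧ q = (v, o₂)) ∨ (p = (v, o₂.neg) ∧ q = (u, o₁.neg)))

@[simp]
theorem Orient.neg_neg (o : Orient) : o.neg.neg = o := by
  cases o <;> rfl

section TArc

variable {V : Type*} {E : Set (V × V × Orient × Orient)} {x y : V} {o₁ o₂ : Orient}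

theorem tArc_of_mem (he : (x, y, o₁, o₂) ∈ E) : TArc E (x, o₁) (y, o₂) :=
  ⟨x, y, o₁, o₂, he, .inl ⟨rfl, rfl⟩⟩

theorem tArc_of_mem_reverse (he : (y, x, o₂.neg, o₁.neg) ∈ E) : TArc E (x, o₁) (y, o₂) :=
  ⟨y, x, o₂.neg, o₁.neg, he, .inr ⟨by simp, by simp⟩⟩

end TArc

namespace IsBiWalk

variable {V : Type*} {E : Set (V × V × Orient × Orient)} {m : ℕ} {vert : ℕ → V}
  {a b : ℕ → Orient} {u v : V}

theorem tArc_step (h : IsBiWalk E m vert a b u v) {l : ℕ} (hl₁ : 1 ≤ l) (hlm : l ≤ m) :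
    TArc E (vert (l - 1), a l) (vert l, b l) :=
  (h.2.2.2.1 l hl₁ hlm).elim tArc_of_mem tArc_of_mem_reverse

theorem reflTransGen_tArc (h : IsBiWalk E m vert a b u v) :
    Relation.ReflTransGen (TArc E) (vert 1, b 1) (vert m, b m) := by
  refine Relation.ReflTransGen.lift (fun l ↦ (vert l, b l)) (fun _ _ ↦ id) _ _
    (reflTransGen_of_succ_of_le (fun i j ↦ TArc E (vert i, b i) (vert j, b j)) ?_ h.1)
  intro i ⟨hi₁, him⟩
  have hstep := h.tArc_step (l := i + 1) (by omega) him
  rw [Order.succ_eq_add_one]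
  rwa [Nat.add_sub_cancel, ← h.2.2.2.2 i hi₁ him] at hstep

end IsBiWalk

/-- A valid bi-directed walk from `u` to `v` with first-edge orientation
pair `(a 1, b 1)` and last-edge orientation pair `(a m, b m)` yields a (nonempty)
directed path in the ListRankingTransform from `u^{a 1}` to `v^{b m}`. -/
theorem transGen_tArc_of_isBiWalk {V : Type*} (E : Set (V × V × Orient × Orient))
    (m : ℕ) (vert : ℕ → V) (a b : ℕ → Orient) (u v : V)
    (h : IsBiWalk E m vert a b u v) :
    Relation.TransGen (TArc E) (u, a 1) (v, b m) := by
  have hfirst : TArc E (vert 0, a 1) (vert 1, b 1) := h.tArc_step le_rfl h.1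
  rw [← h.2.1, ← h.2.2.1]
  exact .head' hfirst h.reflTransGen_tArc
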